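/- (Deterministic oracle decomposition.) Let I ⊆ ℝ be an interval, (φⱼ)_{j≥1} bounded functions ℝ → ℝ vanishing outside I and orthonormal in L²(I,dx), S_m := span(φ₁,…,φ_m), and f ∈ L²(I,dx) with f_m its orthogonal projection onto S_m. Let x₁,…,xₙ ∈ ℝ, and define γ̂(φ) := ‖φ‖²_{L²(I)} − (2/n)Σ_{i=1}^n φ(x_i), ν(φ) := (1/n)Σ_{i=1}^n φ(x_i) − ⟨φ,f⟩_{L²(I)}, and f̂_m := Σ_{j=1}^m ((1/n)Σᵢφⱼ(x_i))φⱼ. Let 𝓜 be a set of positive integers, L(m) := Σ_{j=1}^m ‖φⱼ‖_Lip² (each φⱼ Lipschitz), N > 0, 𝔎 > 0, pen(m) := 𝔎(m+1)L(m)/N and p(m,m̄) := (𝔎/4)·((max(m,m̄))+1)·L(max(m,m̄))/N. Suppose m̂ ∈ 𝓜 satisfies γ̂(f̂_{m̂}) + pen(m̂) ≤ γ̂(f̂_m) + pen(m) for all m ∈ 𝓜. Then for every m ∈ 𝓜: ‖f̂_{m̂} − f‖²_{L²(I)} ≤ 3‖f_m − f‖²_{L²(I)} + 4·pen(m) + 8·Σ_{m̄∈𝓜}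 ( [sup_{φ∈S_{max(m,m̄)}, ‖φ‖_{L²(I)}=1} |ν(φ)|]² − p(m,m̄) )₊, where (u)₊ := max(u,0). -/

import Mathlib

open MeasureTheory Real
open scoped NNReal ENNReal BigOperators

open Finset Submodule

/-! Expanding the square, `‖g - f‖² = γ̂ g + 2 ν g + ‖f‖²` for every `g ∈ L²`. Since `f̂_m`
minimises `γ̂` over `S_m`, the selection rule gives
`‖f̂_m̂ - f‖² ≤ ‖f_m - f‖² + 2 ν (f̂_m̂ - f_m) + pen m - pen m̂`.
The difference `u = f̂_m̂ - f_m` lies in `S_{max(m, m̂)}`, so normalising it gives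
`2 ν u ≤ ‖u‖² / 4 + 4 χ²`, with `χ` the supremum of `|ν|` on the unit sphere of that model, while
`‖u‖² ≤ 2 ‖f̂_m̂ - f‖² + 2 ‖f_m - f‖²`. Absorbing the `f̂_m̂` term and using
`8 p(m, m̂) ≤ 2 pen m + 2 pen m̂` bounds the risk by the single term `m̄ = m̂` of the sum. -/

section L2

variable {α : Type*} [MeasurableSpace α] {μ : Measure α}

theorem memLp_two_of_integral_mul_self_ne_zero {g : α → ℝ} (hg : AEStronglyMeasurable g μ)
    (h : ∫ y, g y * g y ∂μ ≠ 0) : MemLp g 2 μ :=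
  (memLp_two_iff_integrable_sq hg).2 <| by simpa only [sq] using Integrable.of_integral_ne_zero h

theorem integral_sub_sq {g f : α → ℝ} (hg : MemLp g 2 μ) (hf : MemLp f 2 μ) :
    ∫ y, (g y - f y) ^ 2 ∂μ
      = ∫ y, g y ^ 2 ∂μ - 2 * ∫ y, g y * f y ∂μ + ∫ y, f y ^ 2 ∂μ := by
  have hgf : Integrable (fun y => 2 * (g y * f y)) μ := (hg.integrable_mul hf).const_mul 2
  have hexpand : ∀ y, (g y - f y) ^ 2 = g y ^ 2 - 2 * (g y * f y) + f y ^ 2 := fun y => by ring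
  simp_rw [hexpand]
  rw [integral_add _ hf.integrable_sq, integral_sub hg.integrable_sq hgf, integral_const_mul]
  exact hg.integrable_sq.sub hgf

theorem integral_sub_sq_le {g h f : α → ℝ} (hg : MemLp g 2 μ) (hh : MemLp h 2 μ)
    (hf : MemLp f 2 μ) :
    ∫ y, (g y - h y) ^ 2 ∂μ ≤ 2 * ∫ y, (g y - f y) ^ 2 ∂μ + 2 * ∫ y, (h y - f y) ^ 2 ∂μ := by
  have hgf : Integrable (fun y => 2 * (g y - f y) ^ 2) μ :=
    ((hg.sub hf).integrable_sq).const_mul 2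
  have hhf : Integrable (fun y => 2 * (h y - f y) ^ 2) μ :=
    ((hh.sub hf).integrable_sq).const_mul 2
  rw [← integral_const_mul, ← integral_const_mul, ← integral_add hgf hhf]
  refine integral_mono (hg.sub hh).integrable_sq (hgf.add hhf) fun y => ?_
  nlinarith [sq_nonneg (g y + h y - 2 * f y)]

end L2

section Orthonormal

variable {α ι : Type*} [MeasurableSpace α] {μ : Measure α} {φ : ι → α → ℝ}

theorem integral_sum_smul_mul (hφ : ∀ j, MemLp (φ j) 2 μ) {g : α → ℝ} (hg : MemLp g 2 μ)
    (s : Finset ι) (c : ι → ℝ) :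
    ∫ y, (∑ j ∈ s, c j • φ j) y * g y ∂μ = ∑ j ∈ s, c j * ∫ y, φ j y * g y ∂μ := by
  simp only [Finset.sum_apply, Pi.smul_apply, smul_eq_mul, Finset.sum_mul, mul_assoc]
  rw [integral_finsetSum]
  · simp only [integral_const_mul]
  · exact fun j _ => ((hφ j).integrable_mul hg).const_mul (c j)

theorem memLp_sum_smul (hφ : ∀ j, MemLp (φ j) 2 μ) (s : Finset ι) (c : ι → ℝ) :
    MemLp (∑ j ∈ s, c j • φ j) 2 μ :=
  memLp_finsetSum' s fun j _ => (hφ j).const_smul (c j)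

theorem integral_sum_smul_sq [DecidableEq ι] (hφ : ∀ j, MemLp (φ j) 2 μ)
    (horth : ∀ j k, ∫ y, φ j y * φ k y ∂μ = if j = k then 1 else 0) (s : Finset ι) (c : ι → ℝ) :
    ∫ y, (∑ j ∈ s, c j • φ j) y ^ 2 ∂μ = ∑ j ∈ s, c j ^ 2 := by
  have hcoef : ∀ j ∈ s, ∫ y, φ j y * (∑ k ∈ s, c k • φ k) y ∂μ = c j := by
    intro j hj
    simp_rw [mul_comm (φ j _)]
    rw [integral_sum_smul_mul hφ (hφ j)]
    simp [horth, hj]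
  simp_rw [sq]
  rw [integral_sum_smul_mul hφ (memLp_sum_smul hφ s c)]
  exact Finset.sum_congr rfl fun j hj => by rw [hcoef j hj]

theorem eq_zero_of_mem_span_of_integral_sq_eq_zero [DecidableEq ι] (hφ : ∀ j, MemLp (φ j) 2 μ)
    (horth : ∀ j k, ∫ y, φ j y * φ k y ∂μ = if j = k then 1 else 0) {s : Finset ι}
    {ψ : α → ℝ} (hψ : ψ ∈ span ℝ (φ '' s)) (h : ∫ y, ψ y ^ 2 ∂μ = 0) : ψ = 0 := by
  obtain ⟨c, rfl⟩ := (mem_span_image_finset_iff_exists_fun' ℝ).1 hψ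
  rw [integral_sum_smul_sq hφ horth] at h
  have hc : ∀ j ∈ s, c j = 0 := fun j hj =>
    pow_eq_zero_iff two_ne_zero |>.1 <| (sum_eq_zero_iff_of_nonneg fun k _ => sq_nonneg _).1 h j hj
  exact sum_eq_zero fun j hj => by rw [hc j hj, zero_smul]

theorem bddAbove_abs_image_unitSphere [DecidableEq ι] (hφ : ∀ j, MemLp (φ j) 2 μ)
    (horth : ∀ j k, ∫ y, φ j y * φ k y ∂μ = if j = k then 1 else 0) {s : Finset ι}
    {ℓ : (α → ℝ) → ℝ} (hℓ : ∀ c : ι → ℝ, ℓ (∑ j ∈ s, c j • φ j) = ∑ j ∈ s, c j * ℓ (φ j)) :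
    BddAbove ((fun ψ => |ℓ ψ|) '' {ψ | ψ ∈ span ℝ (φ '' s) ∧ ∫ y, ψ y ^ 2 ∂μ = 1}) := by
  refine ⟨√(∑ j ∈ s, ℓ (φ j) ^ 2), ?_⟩
  rintro _ ⟨ψ, ⟨hψ, hψ1⟩, rfl⟩
  obtain ⟨c, rfl⟩ := (mem_span_image_finset_iff_exists_fun' ℝ).1 hψ
  rw [integral_sum_smul_sq hφ horth] at hψ1
  refine Real.abs_le_sqrt ?_
  simpa [hℓ, hψ1] using sum_mul_sq_le_sq_mul_sq s c fun j => ℓ (φ j)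

end Orthonormal

section UnitSphere

variable {E : Type*} [AddCommGroup E] [Module ℝ E] {V : Submodule ℝ E} {ℓ Q : E → ℝ}

theorem abs_le_sSup_mul_sqrt (hℓ : ∀ (t : ℝ) v, ℓ (t • v) = t * ℓ v)
    (hQ : ∀ (t : ℝ) v, Q (t • v) = t ^ 2 * Q v)
    (hbdd : BddAbove ((fun v => |ℓ v|) '' {v | v ∈ V ∧ Q v = 1}))
    {v : E} (hv : v ∈ V) (hQv : 0 < Q v) :
    |ℓ v| ≤ sSup ((fun v => |ℓ v|) '' {v | v ∈ V ∧ Q v = 1}) * √(Q v) := by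
  have hr : 0 < √(Q v) := Real.sqrt_pos.2 hQv
  have hunit : Q ((√(Q v))⁻¹ • v) = 1 := by
    rw [hQ, inv_pow, Real.sq_sqrt hQv.le, inv_mul_cancel₀ hQv.ne']
  have : |ℓ ((√(Q v))⁻¹ • v)| ≤ _ := le_csSup hbdd ⟨_, ⟨V.smul_mem _ hv, hunit⟩, rfl⟩
  rw [hℓ, abs_mul, abs_inv, abs_of_pos hr, inv_mul_le_iff₀ hr, mul_comm] at this
  exact this

theorem two_mul_le_div_four_add_sSup_sq (hℓ : ∀ (t : ℝ) v, ℓ (t • v) = t * ℓ v)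
    (hQ : ∀ (t : ℝ) v, Q (t • v) = t ^ 2 * Q v)
    (hbdd : BddAbove ((fun v => |ℓ v|) '' {v | v ∈ V ∧ Q v = 1}))
    {v : E} (hv : v ∈ V) (hQv : 0 ≤ Q v) (hv0 : Q v = 0 → v = 0) :
    2 * ℓ v ≤ Q v / 4 + 4 * sSup ((fun v => |ℓ v|) '' {v | v ∈ V ∧ Q v = 1}) ^ 2 := by
  set χ := sSup ((fun v => |ℓ v|) '' {v | v ∈ V ∧ Q v = 1})
  rcases hQv.eq_or_lt with h | h
  · have hℓ0 : ℓ v = 0 := by rw [hv0 h.symm, ← zero_smul ℝ (0 : E), hℓ, zero_mul]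
    rw [hℓ0, ← h]
    nlinarith [sq_nonneg χ]
  · have := abs_le_sSup_mul_sqrt hℓ hQ hbdd hv h
    nlinarith [le_abs_self (ℓ v), sq_nonneg (√(Q v) / 2 - 2 * χ), Real.sq_sqrt h.le]

end UnitSphere

noncomputable section Empirical

variable {α : Type*} {n : ℕ}

def empiricalMean (x : Fin n → α) : (α → ℝ) →ₗ[ℝ] ℝ := (n : ℝ)⁻¹ • ∑ i, LinearMap.proj (x i)

theorem empiricalMean_apply (x : Fin n → α) (g : α → ℝ) :
    empiricalMean x g = (n : ℝ)⁻¹ * ∑ i, g (x i) := by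
  simp [empiricalMean]

variable [MeasurableSpace α] {μ : Measure α} (x : Fin n → α)

variable (μ) in
def contrast (g : α → ℝ) : ℝ := ∫ y, g y ^ 2 ∂μ - 2 * empiricalMean x g

variable (μ) in
def empiricalDeviation (f g : α → ℝ) : ℝ := empiricalMean x g - ∫ y, g y * f y ∂μ

def projectionEstimator {ι : Type*} (φ : ι → α → ℝ) (s : Finset ι) : α → ℝ :=
  ∑ j ∈ s, empiricalMean x (φ j) • φ j

theorem empiricalDeviation_smul (f : α → ℝ) (t : ℝ) (g : α → ℝ) :
    empiricalDeviation μ x f (t • g) = t * empiricalDeviation μ x f g := by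
  simp only [empiricalDeviation, map_smul, smul_eq_mul, Pi.smul_apply, mul_assoc,
    integral_const_mul]
  ring

theorem empiricalDeviation_sub {f g h : α → ℝ} (hf : MemLp f 2 μ) (hg : MemLp g 2 μ)
    (hh : MemLp h 2 μ) :
    empiricalDeviation μ x f (g - h) = empiricalDeviation μ x f g - empiricalDeviation μ x f h := by
  simp only [empiricalDeviation, map_sub, Pi.sub_apply, sub_mul]
  rw [integral_sub (f := fun y => g y * f y) (g := fun y => h y * f y)
    (hg.integrable_mul hf) (hh.integrable_mul hf)]
  ring

theorem empiricalDeviation_sum_smul {ι : Type*} {φ : ι → α → ℝ} (hφ : ∀ j, MemLp (φ j) 2 μ)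
    {f : α → ℝ} (hf : MemLp f 2 μ) (s : Finset ι) (c : ι → ℝ) :
    empiricalDeviation μ x f (∑ j ∈ s, c j • φ j)
      = ∑ j ∈ s, c j * empiricalDeviation μ x f (φ j) := by
  simp only [empiricalDeviation, map_sum, map_smul, smul_eq_mul, integral_sum_smul_mul hφ hf,
    mul_sub, sum_sub_distrib]

theorem contrast_sum_smul {ι : Type*} [DecidableEq ι] {φ : ι → α → ℝ}
    (hφ : ∀ j, MemLp (φ j) 2 μ)
    (horth : ∀ j k, ∫ y, φ j y * φ k y ∂μ = if j = k then 1 else 0) (s : Finset ι) (c : ι → ℝ) :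
    contrast μ x (∑ j ∈ s, c j • φ j)
      = ∑ j ∈ s, (c j ^ 2 - 2 * (c j * empiricalMean x (φ j))) := by
  simp only [contrast, integral_sum_smul_sq hφ horth, map_sum, map_smul, smul_eq_mul, mul_sum,
    sum_sub_distrib]

theorem contrast_projectionEstimator_le {ι : Type*} [DecidableEq ι] {φ : ι → α → ℝ}
    (hφ : ∀ j, MemLp (φ j) 2 μ)
    (horth : ∀ j k, ∫ y, φ j y * φ k y ∂μ = if j = k then 1 else 0) (s : Finset ι) (c : ι → ℝ) :
    contrast μ x (projectionEstimator x φ s) ≤ contrast μ x (∑ j ∈ s, c j • φ j) := by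
  rw [projectionEstimator, contrast_sum_smul x hφ horth, contrast_sum_smul x hφ horth]
  exact sum_le_sum fun j _ => by nlinarith [sq_nonneg (c j - empiricalMean x (φ j))]

theorem integral_sub_sq_eq_contrast_add {f g : α → ℝ} (hf : MemLp f 2 μ) (hg : MemLp g 2 μ) :
    ∫ y, (g y - f y) ^ 2 ∂μ
      = contrast μ x g + 2 * empiricalDeviation μ x f g + ∫ y, f y ^ 2 ∂μ := by
  rw [integral_sub_sq hg hf, contrast, empiricalDeviation]
  ring

theorem integral_sub_sq_le_of_contrast_le {φ : ℕ → α → ℝ} (hφ : ∀ j, MemLp (φ j) 2 μ)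
    (horth : ∀ j k, ∫ y, φ j y * φ k y ∂μ = if j = k then 1 else 0)
    {f : α → ℝ} (hf : MemLp f 2 μ) {m m' : ℕ} (c : ℕ → ℝ) {δ : ℝ}
    (hsel : contrast μ x (projectionEstimator x φ (range m'))
      ≤ contrast μ x (projectionEstimator x φ (range m)) + δ) :
    ∫ y, (projectionEstimator x φ (range m') y - f y) ^ 2 ∂μ
      ≤ 3 * ∫ y, ((∑ j ∈ range m, c j • φ j) y - f y) ^ 2 ∂μ + 2 * δ
        + 8 * sSup ((fun ψ => |empiricalDeviation μ x f ψ|) ''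
            {ψ | ψ ∈ span ℝ (φ '' Set.Iio (max m m')) ∧ ∫ y, ψ y ^ 2 ∂μ = 1}) ^ 2 := by
  rw [← coe_range]
  set g := projectionEstimator x φ (range m')
  set h := ∑ j ∈ range m, c j • φ j
  have hmem {k : ℕ} (c : ℕ → ℝ) (hk : k ≤ max m m') :
      ∑ j ∈ range k, c j • φ j ∈ span ℝ (φ '' ↑(range (max m m'))) :=
    sum_smul_mem _ c fun j hj =>
      subset_span ⟨j, mem_coe.2 (mem_range.2 ((mem_range.1 hj).trans_le hk)), rfl⟩
  have hsq (t : ℝ) (ψ : α → ℝ) : ∫ y, (t • ψ) y ^ 2 ∂μ = t ^ 2 * ∫ y, ψ y ^ 2 ∂μ := by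
    simp only [Pi.smul_apply, smul_eq_mul, mul_pow, integral_const_mul]
  have hu : g - h ∈ span ℝ (φ '' ↑(range (max m m'))) :=
    sub_mem (hmem _ (le_max_right m m')) (hmem c (le_max_left m m'))
  have hdiff : 2 * empiricalDeviation μ x f (g - h) ≤ (∫ y, (g - h) y ^ 2 ∂μ) / 4
      + 4 * sSup ((fun ψ => |empiricalDeviation μ x f ψ|) ''
            {ψ | ψ ∈ span ℝ (φ '' ↑(range (max m m'))) ∧ ∫ y, ψ y ^ 2 ∂μ = 1}) ^ 2 :=
    two_mul_le_div_four_add_sSup_sq (empiricalDeviation_smul x f) hsq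
      (bddAbove_abs_image_unitSphere hφ horth (empiricalDeviation_sum_smul x hφ hf _)) hu
      (integral_nonneg fun y => sq_nonneg _)
      (eq_zero_of_mem_span_of_integral_sq_eq_zero hφ horth hu)
  have hgL : MemLp g 2 μ := memLp_sum_smul hφ _ _
  have hhL : MemLp h 2 μ := memLp_sum_smul hφ _ _
  have hg := integral_sub_sq_eq_contrast_add x hf hgL
  have hh := integral_sub_sq_eq_contrast_add x hf hhL
  have hmin := contrast_projectionEstimator_le x hφ horth (range m) c
  have hsub := empiricalDeviation_sub x hf hgL hhL
  have hgh := integral_sub_sq_le hgL hhL hf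
  simp only [Pi.sub_apply] at hdiff
  linarith

end Empirical

theorem ENNReal.ofReal_le_add_mul_tsum {ι : Type*} {a b c : ℝ} {g : ι → ℝ} (i : ι) (hc : 0 ≤ c)
    (h : a ≤ b + c * g i) :
    ENNReal.ofReal a ≤ ENNReal.ofReal b + ENNReal.ofReal c * ∑' j, ENNReal.ofReal (g j) :=
  have hmax : a ≤ b + c * max (g i) 0 := h.trans (by gcongr; exact le_max_left _ _)
  calc ENNReal.ofReal a ≤ ENNReal.ofReal b + ENNReal.ofReal (c * max (g i) 0) :=
        (ENNReal.ofReal_le_ofReal hmax).trans ENNReal.ofReal_add_le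
    _ = ENNReal.ofReal b + ENNReal.ofReal c * ENNReal.ofReal (g i) := by
        rw [ENNReal.ofReal_mul hc, ENNReal.ofReal_max, ENNReal.ofReal_zero, _root_.max_zero]
    _ ≤ _ := by gcongr; exact ENNReal.le_tsum i

/-- `ENNReal.ofReal` plays the role of the positive part `(·)₊`; summing in `ℝ≥0∞` gives the
possibly infinite sum over `𝓜` a meaning. -/
theorem deterministic_oracle_decomposition_general
    (I : Set ℝ)
    (φ : ℕ → ℝ → ℝ) (K : ℕ → ℝ≥0)
    (hlip : ∀ j, LipschitzWith (K j) (φ j))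
    (horth : ∀ j k, (∫ x in I, φ j x * φ k x) = if j = k then (1 : ℝ) else 0)
    (f : ℝ → ℝ) (hf : MemLp f 2 (volume.restrict I))
    (n : ℕ) (x : Fin n → ℝ)
    -- the contrast γ̂, the empirical process ν, the estimators f̂_m
    -- and the projections f_m
    (ghat : (ℝ → ℝ) → ℝ)
    (hghat : ∀ g : ℝ → ℝ,
      ghat g = (∫ y in I, (g y) ^ 2) - 2 * ((n : ℝ)⁻¹ * ∑ i, g (x i)))
    (ν : (ℝ → ℝ) → ℝ)
    (hν : ∀ g : ℝ → ℝ,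
      ν g = (n : ℝ)⁻¹ * ∑ i, g (x i) - ∫ y in I, g y * f y)
    (fhat : ℕ → ℝ → ℝ)
    (hfhat : ∀ m y,
      fhat m y = ∑ j ∈ Finset.range m, ((n : ℝ)⁻¹ * ∑ i, φ j (x i)) * φ j y)
    (fproj : ℕ → ℝ → ℝ)
    (hfproj : ∀ m y,
      fproj m y = ∑ j ∈ Finset.range m, (∫ z in I, f z * φ j z) * φ j y)
    -- the collection of models, the penalty and p(m, m̄)
    (𝓜 : Set ℕ)
    (L : ℕ → ℝ) (hL : ∀ m, L m = ∑ j ∈ Finset.range m, (K j : ℝ) ^ 2)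
    (N 𝔎 : ℝ) (hN : 0 < N) (h𝔎 : 0 < 𝔎)
    (pen : ℕ → ℝ) (hpen : ∀ m, pen m = 𝔎 * ((m : ℝ) + 1) * L m / N)
    (p : ℕ → ℕ → ℝ)
    (hp : ∀ m m', p m m' = (𝔎 / 4) * ((max m m' : ℕ) + 1 : ℝ) * L (max m m') / N)
    -- the selected model
    (mhat : ℕ) (hmhat : mhat ∈ 𝓜)
    (hsel : ∀ m ∈ 𝓜, ghat (fhat mhat) + pen mhat ≤ ghat (fhat m) + pen m) :
    ∀ m ∈ 𝓜,
      ENNReal.ofReal (∫ y in I, (fhat mhat y - f y) ^ 2)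
        ≤ ENNReal.ofReal (3 * (∫ y in I, (fproj m y - f y) ^ 2) + 4 * pen m)
          + 8 * ∑' m' : 𝓜,
              ENNReal.ofReal
                ((sSup ((fun ψ : ℝ → ℝ => |ν ψ|) ''
                    {ψ | ψ ∈ Submodule.span ℝ (φ '' Set.Iio (max m (m' : ℕ)))
                      ∧ (∫ y in I, (ψ y) ^ 2) = 1})) ^ 2
                  - p m (m' : ℕ)) := by
  intro m hm
  set μ := volume.restrict I
  have hφ (j : ℕ) : MemLp (φ j) 2 μ :=
    memLp_two_of_integral_mul_self_ne_zero (hlip j).continuous.aestronglyMeasurable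
      (by simp [horth])
  obtain rfl : ghat = contrast μ x := funext fun g => by rw [hghat, contrast, empiricalMean_apply]
  obtain rfl : ν = empiricalDeviation μ x f :=
    funext fun g => by rw [hν, empiricalDeviation, empiricalMean_apply]
  obtain rfl : fhat = fun k => projectionEstimator x φ (range k) := by
    ext k y
    simp [hfhat, projectionEstimator, empiricalMean_apply]
  beta_reduce at hsel ⊢
  have hproj : fproj m = ∑ j ∈ range m, (∫ z, f z * φ j z ∂μ) • φ j := by
    ext y
    simp [hfproj]
  have hpen0 (k : ℕ) : 0 ≤ pen k := by rw [hpen, hL]; positivity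
  have hp4 : 4 * p m mhat ≤ pen m + pen mhat := by
    have hmax : 4 * p m mhat = pen (max m mhat) := by rw [hp, hpen]; ring
    rcases max_choice m mhat with h | h <;> rw [h] at hmax <;> linarith [hpen0 m, hpen0 mhat]
  have hcore := integral_sub_sq_le_of_contrast_le x hφ horth hf (fun j => ∫ z, f z * φ j z ∂μ)
    (m := m) (m' := mhat) (δ := pen m - pen mhat) (by linarith [hsel m hm])
  rw [← hproj] at hcore
  rw [← ENNReal.ofReal_ofNat 8]
  refine ENNReal.ofReal_le_add_mul_tsum ⟨mhat, hmhat⟩ (by norm_num) ?_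
  dsimp only
  linarith

/-- Deterministic (pathwise) oracle decomposition: Step 1 of the proof of the oracle
inequality. The sum over `m̄ ∈ 𝓜` and the positive parts `(·)₊` are taken in `ℝ≥0∞`
(via `ENNReal.ofReal`), so that a possibly infinite sum is handled correctly. -/
theorem deterministic_oracle_decomposition
    (I : Set ℝ) (hImeas : MeasurableSet I) (hIint : I.OrdConnected)
    (φ : ℕ → ℝ → ℝ) (K : ℕ → ℝ≥0)
    (hbdd : ∀ j, ∃ Cb : ℝ, ∀ x, |φ j x| ≤ Cb)
    (hlip : ∀ j, LipschitzWith (K j) (φ j))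
    (hsupp : ∀ j, ∀ x ∉ I, φ j x = 0)
    (horth : ∀ j k, (∫ x in I, φ j x * φ k x) = if j = k then (1 : ℝ) else 0)
    (f : ℝ → ℝ) (hf : MemLp f 2 (volume.restrict I))
    (n : ℕ) (hn : 1 ≤ n) (x : Fin n → ℝ)
    -- the contrast γ̂, the empirical process ν, the estimators f̂_m
    -- and the projections f_m
    (ghat : (ℝ → ℝ) → ℝ)
    (hghat : ∀ g : ℝ → ℝ,
      ghat g = (∫ y in I, (g y) ^ 2) - 2 * ((n : ℝ)⁻¹ * ∑ i, g (x i)))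
    (ν : (ℝ → ℝ) → ℝ)
    (hν : ∀ g : ℝ → ℝ,
      ν g = (n : ℝ)⁻¹ * ∑ i, g (x i) - ∫ y in I, g y * f y)
    (fhat : ℕ → ℝ → ℝ)
    (hfhat : ∀ m y,
      fhat m y = ∑ j ∈ Finset.range m, ((n : ℝ)⁻¹ * ∑ i, φ j (x i)) * φ j y)
    (fproj : ℕ → ℝ → ℝ)
    (hfproj : ∀ m y,
      fproj m y = ∑ j ∈ Finset.range m, (∫ z in I, f z * φ j z) * φ j y)
    -- the collection of models, the penalty and p(m, m̄)
    (𝓜 : Set ℕ) (h𝓜 : ∀ m ∈ 𝓜, 1 ≤ m)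
    (L : ℕ → ℝ) (hL : ∀ m, L m = ∑ j ∈ Finset.range m, (K j : ℝ) ^ 2)
    (N 𝔎 : ℝ) (hN : 0 < N) (h𝔎 : 0 < 𝔎)
    (pen : ℕ → ℝ) (hpen : ∀ m, pen m = 𝔎 * ((m : ℝ) + 1) * L m / N)
    (p : ℕ → ℕ → ℝ)
    (hp : ∀ m m', p m m' = (𝔎 / 4) * ((max m m' : ℕ) + 1 : ℝ) * L (max m m') / N)
    -- the selected model
    (mhat : ℕ) (hmhat : mhat ∈ 𝓜)
    (hsel : ∀ m ∈ 𝓜, ghat (fhat mhat) + pen mhat ≤ ghat (fhat m) + pen m) :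
    ∀ m ∈ 𝓜,
      ENNReal.ofReal (∫ y in I, (fhat mhat y - f y) ^ 2)
        ≤ ENNReal.ofReal (3 * (∫ y in I, (fproj m y - f y) ^ 2) + 4 * pen m)
          + 8 * ∑' m' : 𝓜,
              ENNReal.ofReal
                ((sSup ((fun ψ : ℝ → ℝ => |ν ψ|) ''
                    {ψ | ψ ∈ Submodule.span ℝ (φ '' Set.Iio (max m (m' : ℕ)))
                      ∧ (∫ y in I, (ψ y) ^ 2) = 1})) ^ 2
                  - p m (m' : ℕ)) :=
  deterministic_oracle_decomposition_general I φ K hlip horth f hf n x ghat hghat ν hν fhat hfhat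
    fproj hfproj 𝓜 L hL N 𝔎 hN h𝔎 pen hpen p hp mhat hmhat hsel
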